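/- arXiv:1604.05130 — 4 statements merged into one kernel-verified Lean document; each statement's English description precedes it below -/
import Mathlib

section
/- Let K be a group, let A₁ and A₂ be additive abelian groups, and suppose K acts on A := A₁ × A₂ by additive automorphisms. Let H ≤ K and G ≤ K be subgroups such that every element k ∈ K can be written uniquely as k = hg with h ∈ H and g ∈ G, such that for every h ∈ H the map a ↦ h • a sends A₁ × {0} into itself, and for every g ∈ G the map a ↦ g • a sends {0} × A₂ into itself. Set S₁ = {((μ, 0), h) : μ ∈ A₁, h ∈ H} and S₂ = {((0, ν), g) : ν ∈ A₂, g ∈ G} inside the semidirect product A ⋊ K. Then the multiplication map S₁ × S₂ → A ⋊ K, (x, y) ↦ xy, is a bijection. -/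
/-!
The `K`-component of a product `((μ, 0), h) ((0, ν), g)` is `h g`, so unique factorization
`K = H G` recovers `h` and `g`. For fixed `h ∈ H`, both `h` and `h⁻¹` preserve `A₁ × {0}`, so
every `c ∈ A₁ × A₂` is uniquely of the form `a + h • b` with `a ∈ A₁ × {0}` and `b ∈ {0} × A₂`:
for existence write `h⁻¹ • c = (w₁, 0) + (0, w₂)` and apply `h`; for uniqueness,
`h • (b - b') ∈ A₁ × {0}` forces `b - b' ∈ (A₁ × {0}) ∩ ({0} × A₂) = 0`.
-/

/-- The multiplication of the semidirect product `A ⋊ K`: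
`(a₁, k₁)(a₂, k₂) = (a₁ + k₁ • a₂, k₁ k₂)`. -/
def sdMul {A K : Type*} [AddCommGroup A] [Group K] [DistribMulAction K A]
    (p q : A × K) : A × K :=
  (p.1 + p.2 • q.1, p.2 * q.2)

theorem exists_add_smul_eq {K A₁ A₂ : Type*} [Group K] [AddMonoid A₁] [AddMonoid A₂]
    [DistribMulAction K (A₁ × A₂)] {k : K}
    (hk : ∀ μ : A₁, (k • ((μ, 0) : A₁ × A₂)).2 = 0) (c : A₁ × A₂) :
    ∃ a b : A₁ × A₂, a.2 = 0 ∧ b.1 = 0 ∧ a + k • b = c := by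
  set w := k⁻¹ • c
  refine ⟨k • (w.1, 0), (0, w.2), hk w.1, rfl, ?_⟩
  rw [← smul_add, Prod.mk_add_mk, add_zero, zero_add, smul_inv_smul]

theorem eq_and_eq_of_add_smul_eq_add_smul {K A₁ A₂ : Type*} [Group K] [AddCommGroup A₁]
    [AddCommGroup A₂] [DistribMulAction K (A₁ × A₂)] {k : K}
    (hk : ∀ μ : A₁, (k⁻¹ • ((μ, 0) : A₁ × A₂)).2 = 0) {a a' b b' : A₁ × A₂}
    (ha : a.2 = 0) (ha' : a'.2 = 0) (hb : b.1 = 0) (hb' : b'.1 = 0)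
    (h : a + k • b = a' + k • b') : a = a' ∧ b = b' := by
  have hdiff : b - b' = k⁻¹ • ((a' - a).1, 0) := by
    have hsub : ((a' - a).1, (0 : A₂)) = a' - a := Prod.ext rfl (by simp [ha, ha'])
    rw [hsub, eq_inv_smul_iff, smul_sub, sub_eq_sub_iff_add_eq_add, add_comm]
    exact h
  have hb_eq : b = b' := by
    refine Prod.ext (hb.trans hb'.symm) (sub_eq_zero.mp ?_)
    rw [← Prod.snd_sub, hdiff, hk]
  subst hb_eq
  exact ⟨add_right_cancel h, rfl⟩

theorem semidirect_matched_pair_decomposition_general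
    {K A₁ A₂ : Type*} [Group K] [AddCommGroup A₁] [AddCommGroup A₂]
    [DistribMulAction K (A₁ × A₂)]
    (H G : Subgroup K)
    (hfact : ∀ k : K, ∃! p : H × G, (p.1 : K) * (p.2 : K) = k)
    (hH : ∀ h ∈ H, ∀ μ : A₁, (h • ((μ, 0) : A₁ × A₂)).2 = 0) :
    Function.Bijective
      (fun p : {x : (A₁ × A₂) × K // x.1.2 = 0 ∧ x.2 ∈ H} ×
               {x : (A₁ × A₂) × K // x.1.1 = 0 ∧ x.2 ∈ G} =>
        sdMul (p.1 : (A₁ × A₂) × K) (p.2 : (A₁ × A₂) × K)) := by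
  constructor
  · rintro ⟨⟨⟨a, h⟩, ha, hh⟩, ⟨⟨b, g⟩, hb, hg⟩⟩ ⟨⟨⟨a', h'⟩, ha', hh'⟩, ⟨⟨b', g'⟩, hb', hg'⟩⟩ heq
    obtain ⟨hA, hK⟩ := Prod.ext_iff.mp heq
    have hpair : ((⟨h, hh⟩, ⟨g, hg⟩) : H × G) = (⟨h', hh'⟩, ⟨g', hg'⟩) :=
      (hfact (h * g)).unique rfl hK.symm
    simp only [Prod.mk.injEq, Subtype.mk.injEq] at hpair
    obtain ⟨rfl, rfl⟩ := hpair
    obtain ⟨rfl, rfl⟩ :=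
      eq_and_eq_of_add_smul_eq_add_smul (hH _ (H.inv_mem hh)) ha ha' hb hb' hA
    rfl
  · rintro ⟨c, k⟩
    obtain ⟨⟨⟨h, hh⟩, ⟨g, hg⟩⟩, rfl, -⟩ := hfact k
    obtain ⟨a, b, ha, hb, rfl⟩ := exists_add_smul_eq (hH h hh) c
    exact ⟨(⟨(a, h), ha, hh⟩, ⟨(b, g), hb, hg⟩), rfl⟩

/-- Let `K` act on `A = A₁ × A₂` by additive automorphisms, and let `H, G ≤ K` be
subgroups such that every `k ∈ K` factors uniquely as `k = h g` with `h ∈ H`,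
`g ∈ G`, such that `H` preserves `A₁ × {0}` and `G` preserves `{0} × A₂`.  Then
with `S₁ = {((μ, 0), h)}` and `S₂ = {((0, ν), g)}` inside the semidirect product
`A ⋊ K`, the multiplication map `S₁ × S₂ → A ⋊ K` is a bijection. -/
theorem semidirect_matched_pair_decomposition
    {K A₁ A₂ : Type*} [Group K] [AddCommGroup A₁] [AddCommGroup A₂]
    [DistribMulAction K (A₁ × A₂)]
    (H G : Subgroup K)
    (hfact : ∀ k : K, ∃! p : H × G, (p.1 : K) * (p.2 : K) = k)
    (hH : ∀ h ∈ H, ∀ μ : A₁, (h • ((μ, 0) : A₁ × A₂)).2 = 0)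
    (hG : ∀ g ∈ G, ∀ ν : A₂, (g • ((0, ν) : A₁ × A₂)).1 = 0) :
    Function.Bijective
      (fun p : {x : (A₁ × A₂) × K // x.1.2 = 0 ∧ x.2 ∈ H} ×
               {x : (A₁ × A₂) × K // x.1.1 = 0 ∧ x.2 ∈ G} =>
        sdMul (p.1 : (A₁ × A₂) × K) (p.2 : (A₁ × A₂) × K)) :=
  semidirect_matched_pair_decomposition_general H G hfact hH
end

section
/- Let (𝔤, 𝔥) be a matched pair of Lie algebras over a field of characteristic zero. Then the direct sum vector space 𝔤 ⊕ 𝔥 equipped with the bracket [(ξ₁, η₁), (ξ₂, η₂)] = ([ξ₁, ξ₂] + η₁ ▷ ξ₂ − η₂ ▷ ξ₁, [η₁, η₂] + η₁ ◁ ξ₂ − η₂ ◁ ξ₁) is a Lie algebra; in particular this bracket is bilinear, alternating, and satisfies the Jacobi identity. -/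
/-!
Bilinearity and alternation are inherited from the brackets of `𝔤`, `𝔥` and the bilinearity
of `▷`, `◁`. In the cyclic Jacobi sum, the `𝔤`-component involves only `▷` and the bracket of `𝔤`:
expanding it with the action law of `▷` and the first compatibility condition, all mixed terms
cancel in pairs and the Jacobi sum of `𝔤` remains. The `𝔥`-component is symmetric, using the
action law of `◁` and the second compatibility condition.
-/

/-- The matched pair bracket on `𝔤 ⊕ 𝔥`:
`[(ξ₁, η₁), (ξ₂, η₂)] = ([ξ₁, ξ₂] + η₁ ▷ ξ₂ − η₂ ▷ ξ₁, [η₁, η₂] + η₁ ◁ ξ₂ − η₂ ◁ ξ₁)`. -/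
def matchedPairBracket {k 𝔤 𝔥 : Type*} [Field k]
    [LieRing 𝔤] [LieAlgebra k 𝔤] [LieRing 𝔥] [LieAlgebra k 𝔥]
    (lact : 𝔥 →ₗ[k] 𝔤 →ₗ[k] 𝔤) (ract : 𝔥 →ₗ[k] 𝔤 →ₗ[k] 𝔥)
    (x y : 𝔤 × 𝔥) : 𝔤 × 𝔥 :=
  (⁅x.1, y.1⁆ + lact x.2 y.1 - lact y.2 x.1,
   ⁅x.2, y.2⁆ + ract x.2 y.1 - ract y.2 x.1)

theorem lie_lie_add_lie_lie_add_lie_lie {L : Type*} [LieRing L] (x y z : L) :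
    ⁅⁅x, y⁆, z⁆ + ⁅⁅y, z⁆, x⁆ + ⁅⁅z, x⁆, y⁆ = 0 :=
  calc ⁅⁅x, y⁆, z⁆ + ⁅⁅y, z⁆, x⁆ + ⁅⁅z, x⁆, y⁆
      = -(⁅x, ⁅y, z⁆⁆ + ⁅y, ⁅z, x⁆⁆ + ⁅z, ⁅x, y⁆⁆) := by
        rw [← lie_skew ⁅x, y⁆ z, ← lie_skew ⁅y, z⁆ x, ← lie_skew ⁅z, x⁆ y]; abel
    _ = 0 := by rw [lie_jacobi, neg_zero]

section MatchedPair

variable {k 𝔤 𝔥 : Type*} [Field k] [LieRing 𝔤] [LieAlgebra k 𝔤] [LieRing 𝔥] [LieAlgebra k 𝔥]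
  (lact : 𝔥 →ₗ[k] 𝔤 →ₗ[k] 𝔤) (ract : 𝔥 →ₗ[k] 𝔤 →ₗ[k] 𝔥)

theorem matchedPairBracket_add_left (x y z : 𝔤 × 𝔥) :
    matchedPairBracket lact ract (x + y) z =
      matchedPairBracket lact ract x z + matchedPairBracket lact ract y z := by
  simp only [matchedPairBracket, Prod.fst_add, Prod.snd_add, add_lie, map_add,
    LinearMap.add_apply, Prod.mk_add_mk, Prod.mk.injEq]
  constructor <;> abel

theorem matchedPairBracket_add_right (x y z : 𝔤 × 𝔥) :
    matchedPairBracket lact ract x (y + z) =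
      matchedPairBracket lact ract x y + matchedPairBracket lact ract x z := by
  simp only [matchedPairBracket, Prod.fst_add, Prod.snd_add, lie_add, map_add,
    LinearMap.add_apply, Prod.mk_add_mk, Prod.mk.injEq]
  constructor <;> abel

theorem matchedPairBracket_smul_left (a : k) (x y : 𝔤 × 𝔥) :
    matchedPairBracket lact ract (a • x) y = a • matchedPairBracket lact ract x y := by
  simp only [matchedPairBracket, Prod.smul_fst, Prod.smul_snd, smul_lie, map_smul,
    LinearMap.smul_apply, Prod.smul_mk, Prod.mk.injEq]
  constructor <;> module

theorem matchedPairBracket_smul_right (a : k) (x y : 𝔤 × 𝔥) :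
    matchedPairBracket lact ract x (a • y) = a • matchedPairBracket lact ract x y := by
  simp only [matchedPairBracket, Prod.smul_fst, Prod.smul_snd, lie_smul, map_smul,
    LinearMap.smul_apply, Prod.smul_mk, Prod.mk.injEq]
  constructor <;> module

theorem matchedPairBracket_self (x : 𝔤 × 𝔥) : matchedPairBracket lact ract x x = 0 := by
  simp [matchedPairBracket]

variable {lact ract}

theorem matchedPairBracket_jacobi_fst
    (hlact : ∀ (η₁ η₂ : 𝔥) (ξ : 𝔤),
      lact ⁅η₁, η₂⁆ ξ = lact η₁ (lact η₂ ξ) - lact η₂ (lact η₁ ξ))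
    (hcomp₁ : ∀ (η : 𝔥) (ξ₁ ξ₂ : 𝔤),
      lact η ⁅ξ₁, ξ₂⁆ = ⁅lact η ξ₁, ξ₂⁆ + ⁅ξ₁, lact η ξ₂⁆
        + lact (ract η ξ₁) ξ₂ - lact (ract η ξ₂) ξ₁)
    (x y z : 𝔤 × 𝔥) :
    (matchedPairBracket lact ract (matchedPairBracket lact ract x y) z
      + matchedPairBracket lact ract (matchedPairBracket lact ract y z) x
      + matchedPairBracket lact ract (matchedPairBracket lact ract z x) y).1 = 0 := by
  simp only [matchedPairBracket, Prod.fst_add, map_add, map_sub, LinearMap.add_apply,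
    LinearMap.sub_apply, add_lie, sub_lie, hlact, hcomp₁]
  rw [← lie_skew x.1 (lact z.2 y.1), ← lie_skew y.1 (lact x.2 z.1),
    ← lie_skew z.1 (lact y.2 x.1), ← lie_lie_add_lie_lie_add_lie_lie x.1 y.1 z.1]
  abel

theorem matchedPairBracket_jacobi_snd
    (hract : ∀ (η : 𝔥) (ξ₁ ξ₂ : 𝔤),
      ract η ⁅ξ₁, ξ₂⁆ = ract (ract η ξ₁) ξ₂ - ract (ract η ξ₂) ξ₁)
    (hcomp₂ : ∀ (η₁ η₂ : 𝔥) (ξ : 𝔤),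
      ract ⁅η₁, η₂⁆ ξ = ⁅η₁, ract η₂ ξ⁆ + ⁅ract η₁ ξ, η₂⁆
        + ract η₁ (lact η₂ ξ) - ract η₂ (lact η₁ ξ))
    (x y z : 𝔤 × 𝔥) :
    (matchedPairBracket lact ract (matchedPairBracket lact ract x y) z
      + matchedPairBracket lact ract (matchedPairBracket lact ract y z) x
      + matchedPairBracket lact ract (matchedPairBracket lact ract z x) y).2 = 0 := by
  simp only [matchedPairBracket, Prod.snd_add, map_add, map_sub, LinearMap.add_apply,
    LinearMap.sub_apply, add_lie, sub_lie, hract, hcomp₂]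
  rw [← lie_skew x.2 (ract y.2 z.1), ← lie_skew y.2 (ract z.2 x.1),
    ← lie_skew z.2 (ract x.2 y.1), ← lie_lie_add_lie_lie_add_lie_lie x.2 y.2 z.2]
  abel

end MatchedPair

theorem matchedPair_lieAlgebra_general {k 𝔤 𝔥 : Type*} [Field k]
    [LieRing 𝔤] [LieAlgebra k 𝔤] [LieRing 𝔥] [LieAlgebra k 𝔥]
    (lact : 𝔥 →ₗ[k] 𝔤 →ₗ[k] 𝔤) (ract : 𝔥 →ₗ[k] 𝔤 →ₗ[k] 𝔥)
    -- `▷` is a left Lie algebra action of `𝔥` on `𝔤`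
    (hlact : ∀ (η₁ η₂ : 𝔥) (ξ : 𝔤),
      lact ⁅η₁, η₂⁆ ξ = lact η₁ (lact η₂ ξ) - lact η₂ (lact η₁ ξ))
    -- `◁` is a right Lie algebra action of `𝔤` on `𝔥`
    (hract : ∀ (η : 𝔥) (ξ₁ ξ₂ : 𝔤),
      ract η ⁅ξ₁, ξ₂⁆ = ract (ract η ξ₁) ξ₂ - ract (ract η ξ₂) ξ₁)
    -- compatibility conditions
    (hcomp₁ : ∀ (η : 𝔥) (ξ₁ ξ₂ : 𝔤),
      lact η ⁅ξ₁, ξ₂⁆ = ⁅lact η ξ₁, ξ₂⁆ + ⁅ξ₁, lact η ξ₂⁆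
        + lact (ract η ξ₁) ξ₂ - lact (ract η ξ₂) ξ₁)
    (hcomp₂ : ∀ (η₁ η₂ : 𝔥) (ξ : 𝔤),
      ract ⁅η₁, η₂⁆ ξ = ⁅η₁, ract η₂ ξ⁆ + ⁅ract η₁ ξ, η₂⁆
        + ract η₁ (lact η₂ ξ) - ract η₂ (lact η₁ ξ)) :
    -- the bracket is bilinear
    (∀ x y z : 𝔤 × 𝔥,
      matchedPairBracket lact ract (x + y) z =
        matchedPairBracket lact ract x z + matchedPairBracket lact ract y z) ∧
    (∀ x y z : 𝔤 × 𝔥,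
      matchedPairBracket lact ract x (y + z) =
        matchedPairBracket lact ract x y + matchedPairBracket lact ract x z) ∧
    (∀ (a : k) (x y : 𝔤 × 𝔥),
      matchedPairBracket lact ract (a • x) y = a • matchedPairBracket lact ract x y) ∧
    (∀ (a : k) (x y : 𝔤 × 𝔥),
      matchedPairBracket lact ract x (a • y) = a • matchedPairBracket lact ract x y) ∧
    -- the bracket is alternating
    (∀ x : 𝔤 × 𝔥, matchedPairBracket lact ract x x = 0) ∧
    -- the bracket satisfies the Jacobi identity
    (∀ x y z : 𝔤 × 𝔥,
      matchedPairBracket lact ract (matchedPairBracket lact ract x y) z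
        + matchedPairBracket lact ract (matchedPairBracket lact ract y z) x
        + matchedPairBracket lact ract (matchedPairBracket lact ract z x) y = 0) :=
  ⟨matchedPairBracket_add_left lact ract, matchedPairBracket_add_right lact ract,
    matchedPairBracket_smul_left lact ract, matchedPairBracket_smul_right lact ract,
    matchedPairBracket_self lact ract, fun x y z =>
      Prod.ext (matchedPairBracket_jacobi_fst hlact hcomp₁ x y z)
        (matchedPairBracket_jacobi_snd hract hcomp₂ x y z)⟩

/-- For a matched pair `(𝔤, 𝔥)` of Lie algebras over a field of characteristic zero,
the matched pair bracket on `𝔤 ⊕ 𝔥` is bilinear, alternating, and satisfies the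
Jacobi identity, i.e. `𝔤 ⊕ 𝔥` is a Lie algebra. -/
theorem matchedPair_lieAlgebra {k 𝔤 𝔥 : Type*} [Field k] [CharZero k]
    [LieRing 𝔤] [LieAlgebra k 𝔤] [LieRing 𝔥] [LieAlgebra k 𝔥]
    (lact : 𝔥 →ₗ[k] 𝔤 →ₗ[k] 𝔤) (ract : 𝔥 →ₗ[k] 𝔤 →ₗ[k] 𝔥)
    -- `▷` is a left Lie algebra action of `𝔥` on `𝔤`
    (hlact : ∀ (η₁ η₂ : 𝔥) (ξ : 𝔤),
      lact ⁅η₁, η₂⁆ ξ = lact η₁ (lact η₂ ξ) - lact η₂ (lact η₁ ξ))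
    -- `◁` is a right Lie algebra action of `𝔤` on `𝔥`
    (hract : ∀ (η : 𝔥) (ξ₁ ξ₂ : 𝔤),
      ract η ⁅ξ₁, ξ₂⁆ = ract (ract η ξ₁) ξ₂ - ract (ract η ξ₂) ξ₁)
    -- compatibility conditions
    (hcomp₁ : ∀ (η : 𝔥) (ξ₁ ξ₂ : 𝔤),
      lact η ⁅ξ₁, ξ₂⁆ = ⁅lact η ξ₁, ξ₂⁆ + ⁅ξ₁, lact η ξ₂⁆
        + lact (ract η ξ₁) ξ₂ - lact (ract η ξ₂) ξ₁)
    (hcomp₂ : ∀ (η₁ η₂ : 𝔥) (ξ : 𝔤),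
      ract ⁅η₁, η₂⁆ ξ = ⁅η₁, ract η₂ ξ⁆ + ⁅ract η₁ ξ, η₂⁆
        + ract η₁ (lact η₂ ξ) - ract η₂ (lact η₁ ξ)) :
    -- the bracket is bilinear
    (∀ x y z : 𝔤 × 𝔥,
      matchedPairBracket lact ract (x + y) z =
        matchedPairBracket lact ract x z + matchedPairBracket lact ract y z) ∧
    (∀ x y z : 𝔤 × 𝔥,
      matchedPairBracket lact ract x (y + z) =
        matchedPairBracket lact ract x y + matchedPairBracket lact ract x z) ∧
    (∀ (a : k) (x y : 𝔤 × 𝔥),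
      matchedPairBracket lact ract (a • x) y = a • matchedPairBracket lact ract x y) ∧
    (∀ (a : k) (x y : 𝔤 × 𝔥),
      matchedPairBracket lact ract x (a • y) = a • matchedPairBracket lact ract x y) ∧
    -- the bracket is alternating
    (∀ x : 𝔤 × 𝔥, matchedPairBracket lact ract x x = 0) ∧
    -- the bracket satisfies the Jacobi identity
    (∀ x y z : 𝔤 × 𝔥,
      matchedPairBracket lact ract (matchedPairBracket lact ract x y) z
        + matchedPairBracket lact ract (matchedPairBracket lact ract y z) x
        + matchedPairBracket lact ract (matchedPairBracket lact ract z x) y = 0) :=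
  matchedPair_lieAlgebra_general lact ract hlact hract hcomp₁ hcomp₂
end

section
/- The map φ from the group K = {(a, b, c) ∈ ℝ³ : c > −1} (with operation (a₁, b₁, c₁) ∗ (a₂, b₂, c₂) = (1 + c₂) · (a₁, b₁, c₁) + (a₂, b₂, c₂)) to SL(2, ℂ) defined by φ(a, b, c) = (1 + c)^{−1/2} · [[1 + c, 0], [a + ib, 1]] is a well-defined injective group homomorphism; in particular each φ(a, b, c) has determinant 1 and φ((a₁,b₁,c₁) ∗ (a₂,b₂,c₂)) = φ(a₁,b₁,c₁) · φ(a₂,b₂,c₂). -/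
open Matrix Complex

/-!
Up to the scalar `(1 + c)^{-1/2}`, `φ(a, b, c)` is the matrix `[[1 + c, 0], [z, 1]]` with
`z = a + ib`. Such matrices multiply like the affine maps `w ↦ (1 + c) w + z` compose, and the
group law of `K` is precisely this composition; since `1 + c` is multiplicative, so is the
scalar. The `(1, 1)` entry `(1 + c)^{-1/2}` recovers `c`, and then the `(1, 0)` entry recovers `z`.
-/

/-- The group operation on `K = {(a, b, c) ∈ ℝ³ : c > −1}`:
`(a₁, b₁, c₁) ∗ (a₂, b₂, c₂) = (1 + c₂) • (a₁, b₁, c₁) + (a₂, b₂, c₂)`. -/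
def Kop (p q : ℝ × ℝ × ℝ) : ℝ × ℝ × ℝ :=
  (1 + q.2.2) • p + q

/-- The map `φ(a, b, c) = (1 + c)^{−1/2} • [[1 + c, 0], [a + ib, 1]]`, where
`(1 + c)^{−1/2}` is the inverse of the positive real square root of `1 + c`. -/
noncomputable def Kphi (p : ℝ × ℝ × ℝ) : Matrix (Fin 2) (Fin 2) ℂ :=
  (((Real.sqrt (1 + p.2.2))⁻¹ : ℝ) : ℂ) •
    !![((1 + p.2.2 : ℝ) : ℂ), 0; (p.1 : ℂ) + (p.2.1 : ℂ) * Complex.I, 1]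

theorem Matrix.lowerTriangular_fin_two_mul {R : Type*} [Semiring R] (x y z w : R) :
    !![x, 0; z, 1] * !![y, 0; w, 1] = !![x * y, 0; z * y + w, 1] := by
  simp

theorem one_add_Kop_snd_snd (p q : ℝ × ℝ × ℝ) :
    1 + (Kop p q).2.2 = (1 + p.2.2) * (1 + q.2.2) := by
  simp only [Kop, Prod.snd_add, Prod.smul_snd, smul_eq_mul]
  ring

theorem Kop_fst_add_snd_fst_mul_I (p q : ℝ × ℝ × ℝ) :
    ((Kop p q).1 : ℂ) + (Kop p q).2.1 * I =
      ((p.1 : ℂ) + p.2.1 * I) * ((1 + q.2.2 : ℝ) : ℂ) + ((q.1 : ℂ) + q.2.1 * I) := by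
  simp only [Kop, Prod.fst_add, Prod.snd_add, Prod.smul_fst, Prod.smul_snd, smul_eq_mul]
  push_cast
  ring

theorem ofReal_inv_sqrt_sq_mul {t : ℝ} (ht : 0 < t) :
    (((Real.sqrt t)⁻¹ : ℝ) : ℂ) ^ 2 * (t : ℂ) = 1 := by
  rw [← ofReal_pow, ← ofReal_mul, inv_pow, Real.sq_sqrt ht.le, inv_mul_cancel₀ ht.ne', ofReal_one]

theorem Kphi_det {p : ℝ × ℝ × ℝ} (hp : -1 < p.2.2) : (Kphi p).det = 1 := by
  rw [Kphi, det_smul, det_fin_two_of, Fintype.card_fin]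
  simpa using ofReal_inv_sqrt_sq_mul (by linarith : (0 : ℝ) < 1 + p.2.2)

theorem Kphi_apply_one_zero (p : ℝ × ℝ × ℝ) :
    Kphi p 1 0 = (((Real.sqrt (1 + p.2.2))⁻¹ : ℝ) : ℂ) * ((p.1 : ℂ) + p.2.1 * I) := by
  simp [Kphi]

theorem Kphi_apply_one_one (p : ℝ × ℝ × ℝ) :
    Kphi p 1 1 = (((Real.sqrt (1 + p.2.2))⁻¹ : ℝ) : ℂ) := by
  simp [Kphi]

theorem Kphi_Kop {p q : ℝ × ℝ × ℝ} (hp : -1 ≤ p.2.2) :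
    Kphi (Kop p q) = Kphi p * Kphi q := by
  have hsqrt : Real.sqrt (1 + (Kop p q).2.2) = Real.sqrt (1 + p.2.2) * Real.sqrt (1 + q.2.2) := by
    rw [one_add_Kop_snd_snd, Real.sqrt_mul (by linarith)]
  rw [Kphi, Kphi, Kphi, smul_mul_smul_comm, lowerTriangular_fin_two_mul,
    Kop_fst_add_snd_fst_mul_I, hsqrt, one_add_Kop_snd_snd]
  push_cast
  rw [mul_inv]

theorem Kphi_injOn : Set.InjOn Kphi {p : ℝ × ℝ × ℝ | -1 < p.2.2} := by
  intro p hp q hq h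
  have hsqrt : Real.sqrt (1 + p.2.2) = Real.sqrt (1 + q.2.2) := by
    simpa [Kphi_apply_one_one] using congrFun (congrFun h 1) 1
  have hc : p.2.2 = q.2.2 := by
    have := (Real.sqrt_inj (by linarith [hp.out]) (by linarith [hq.out])).1 hsqrt
    linarith
  have hz : (p.1 : ℂ) + p.2.1 * I = q.1 + q.2.1 * I := by
    have h10 := congrFun (congrFun h 1) 0
    rw [Kphi_apply_one_zero, Kphi_apply_one_zero, hsqrt] at h10
    refine mul_left_cancel₀ (ofReal_ne_zero.2 (inv_ne_zero ?_)) h10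
    exact (Real.sqrt_pos.2 (by linarith [hq.out])).ne'
  obtain ⟨ha, hb⟩ : p.1 = q.1 ∧ p.2.1 = q.2.1 := by simpa [Complex.ext_iff] using hz
  exact Prod.ext ha (Prod.ext hb hc)

/-- The map `φ : K → SL(2, ℂ)`, `φ(a, b, c) = (1 + c)^{−1/2} • [[1 + c, 0], [a + ib, 1]]`,
is a well-defined injective group homomorphism; in particular each `φ(a, b, c)` has
determinant `1`, and `φ((a₁,b₁,c₁) ∗ (a₂,b₂,c₂)) = φ(a₁,b₁,c₁) · φ(a₂,b₂,c₂)`. -/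
theorem Kphi_injective_hom :
    -- well-definedness: `φ` lands in `SL(2, ℂ)`
    (∀ p : ℝ × ℝ × ℝ, p.2.2 > -1 → (Kphi p).det = 1) ∧
    -- `φ` is a group homomorphism
    (∀ p q : ℝ × ℝ × ℝ, p.2.2 > -1 → q.2.2 > -1 →
      Kphi (Kop p q) = Kphi p * Kphi q) ∧
    -- `φ` is injective
    Set.InjOn Kphi {p : ℝ × ℝ × ℝ | p.2.2 > -1} := by
  exact ⟨fun _ hp => Kphi_det hp, fun _ _ hp _ => Kphi_Kop hp.le, Kphi_injOn⟩
end

section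
/- The vector space ℝ³ equipped with the bracket [Y₁, Y₂] := k × (Y₁ × Y₂), where × is the cross product and k = (0, 0, 1), is a Lie algebra: the bracket is bilinear, alternating ([Y, Y] = 0), and satisfies the Jacobi identity [[Y₁, Y₂], Y₃] + [[Y₂, Y₃], Y₁] + [[Y₃, Y₁], Y₂] = 0. -/
/-- The standard cross product on `ℝ³` (written as `ℝ × ℝ × ℝ`). -/
def cross3 (v w : ℝ × ℝ × ℝ) : ℝ × ℝ × ℝ :=
  (v.2.1 * w.2.2 - v.2.2 * w.2.1,
   v.2.2 * w.1 - v.1 * w.2.2,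
   v.1 * w.2.1 - v.2.1 * w.1)

/-- The bracket `[Y₁, Y₂] = k × (Y₁ × Y₂)` on `ℝ³`, where `k = (0, 0, 1)`. -/
def Kbracket (Y₁ Y₂ : ℝ × ℝ × ℝ) : ℝ × ℝ × ℝ :=
  cross3 ((0, 0, 1) : ℝ × ℝ × ℝ) (cross3 Y₁ Y₂)

/-!
By the triple product expansion `k × (Y₁ × Y₂) = (k·Y₂) Y₁ - (k·Y₁) Y₂`, the bracket is
`[X, Y] = f(Y) X - f(X) Y` for the linear functional `f = ⟨k, ·⟩`. Any linear functional
defines a Lie bracket this way: since `f [X, Y] = 0`, we get `[[X, Y], Z] = f(Z) [X, Y]`,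
and the Jacobi sum cancels term by term.
-/

namespace LinearMap

variable {R M : Type*} [CommRing R] [AddCommGroup M] [Module R M]

def functionalBracket (f : M →ₗ[R] R) (X Y : M) : M :=
  f Y • X - f X • Y

variable (f : M →ₗ[R] R)

theorem functionalBracket_add_left (X Y Z : M) :
    f.functionalBracket (X + Y) Z = f.functionalBracket X Z + f.functionalBracket Y Z := by
  simp only [functionalBracket, map_add, smul_add, add_smul]
  abel

theorem functionalBracket_add_right (X Y Z : M) :
    f.functionalBracket X (Y + Z) = f.functionalBracket X Y + f.functionalBracket X Z := by
  simp only [functionalBracket, map_add, smul_add, add_smul]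
  abel

theorem functionalBracket_smul_left (a : R) (X Y : M) :
    f.functionalBracket (a • X) Y = a • f.functionalBracket X Y := by
  simp only [functionalBracket, map_smul, smul_sub, smul_eq_mul, mul_smul, smul_comm (f Y) a]

theorem functionalBracket_smul_right (a : R) (X Y : M) :
    f.functionalBracket X (a • Y) = a • f.functionalBracket X Y := by
  simp only [functionalBracket, map_smul, smul_sub, smul_eq_mul, mul_smul, smul_comm (f X) a]

theorem functionalBracket_self (X : M) : f.functionalBracket X X = 0 :=
  sub_self _

theorem apply_functionalBracket (X Y : M) : f (f.functionalBracket X Y) = 0 := by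
  simp only [functionalBracket, map_sub, map_smul, smul_eq_mul, mul_comm, sub_self]

theorem functionalBracket_functionalBracket_left (X Y Z : M) :
    f.functionalBracket (f.functionalBracket X Y) Z = f Z • f.functionalBracket X Y := by
  change f Z • _ - f (f.functionalBracket X Y) • Z = _
  rw [apply_functionalBracket, zero_smul, sub_zero]

theorem functionalBracket_jacobi (X Y Z : M) :
    f.functionalBracket (f.functionalBracket X Y) Z
      + f.functionalBracket (f.functionalBracket Y Z) X
      + f.functionalBracket (f.functionalBracket Z X) Y = 0 := by
  simp only [functionalBracket_functionalBracket_left]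
  simp only [functionalBracket]
  module

end LinearMap

def zCoord : ℝ × ℝ × ℝ →ₗ[ℝ] ℝ :=
  (LinearMap.snd ℝ ℝ ℝ).comp (LinearMap.snd ℝ ℝ (ℝ × ℝ))

theorem Kbracket_eq_functionalBracket : Kbracket = zCoord.functionalBracket := by
  ext ⟨x₁, y₁, z₁⟩ ⟨x₂, y₂, z₂⟩ <;>
    simp only [Kbracket, cross3, zCoord, LinearMap.functionalBracket, LinearMap.coe_comp,
      Function.comp_apply, LinearMap.coe_snd, Prod.fst_sub, Prod.snd_sub, Prod.smul_fst,
      Prod.smul_snd, smul_eq_mul] <;>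
    ring

/-- `ℝ³` with the bracket `[Y₁, Y₂] = k × (Y₁ × Y₂)`, `k = (0, 0, 1)`, is a Lie
algebra: the bracket is bilinear, alternating and satisfies the Jacobi identity. -/
theorem Kbracket_lieAlgebra :
    -- bilinearity
    (∀ X Y Z : ℝ × ℝ × ℝ, Kbracket (X + Y) Z = Kbracket X Z + Kbracket Y Z) ∧
    (∀ X Y Z : ℝ × ℝ × ℝ, Kbracket X (Y + Z) = Kbracket X Y + Kbracket X Z) ∧
    (∀ (a : ℝ) (X Y : ℝ × ℝ × ℝ), Kbracket (a • X) Y = a • Kbracket X Y) ∧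
    (∀ (a : ℝ) (X Y : ℝ × ℝ × ℝ), Kbracket X (a • Y) = a • Kbracket X Y) ∧
    -- alternating
    (∀ Y : ℝ × ℝ × ℝ, Kbracket Y Y = 0) ∧
    -- the Jacobi identity
    (∀ Y₁ Y₂ Y₃ : ℝ × ℝ × ℝ,
      Kbracket (Kbracket Y₁ Y₂) Y₃ + Kbracket (Kbracket Y₂ Y₃) Y₁
        + Kbracket (Kbracket Y₃ Y₁) Y₂ = 0) := by
  rw [Kbracket_eq_functionalBracket]
  exact ⟨zCoord.functionalBracket_add_left, zCoord.functionalBracket_add_right,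
    zCoord.functionalBracket_smul_left, zCoord.functionalBracket_smul_right,
    zCoord.functionalBracket_self, zCoord.functionalBracket_jacobi⟩
end
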